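/- arXiv:2508.01187 — 4 statements merged into one kernel-verified Lean document; each statement's English description precedes it below -/
import Mathlib

section
/- Let p be a prime and let n ≥ d ≥ 3 be integers. The number of d-tensors T : (𝔽_p^n)^d → 𝔽_p of partition rank at most r is at most p^{2·n^{d-1}·r}. -/
/-- A `d`-tensor on `𝔽_p^n`: a multilinear form `T : (𝔽_p^n)^d → 𝔽_p`. -/
abbrev Tensor (p n d : ℕ) :=
  MultilinearMap (ZMod p) (fun _ : Fin d => (Fin n → ZMod p)) (ZMod p)

/-- `T` has partition rank `1` if there exist a partition of `{1,…,d}` into two nonempty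
sets and multilinear forms `T₁`, `T₂` on the respective sets of variables with
`T(x_1,…,x_d) = T₁(x_{i_1},…,x_{i_a})·T₂(x_{j_1},…,x_{j_b})`. -/
def PRankOne {p n d : ℕ} (T : Tensor p n d) : Prop :=
  ∃ A : Finset (Fin d), A.Nonempty ∧ A ≠ Finset.univ ∧
    ∃ (T₁ : MultilinearMap (ZMod p) (fun _ : {i // i ∈ A} => (Fin n → ZMod p)) (ZMod p))
      (T₂ : MultilinearMap (ZMod p) (fun _ : {i // i ∉ A} => (Fin n → ZMod p)) (ZMod p)),
      ∀ x, T x = T₁ (fun i => x i.1) * T₂ (fun i => x i.1)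

/-- The partition rank of `T`: the smallest `r` such that `T` is a sum of `r` tensors each
of partition rank `1` (and `prank 0 = 0`). -/
noncomputable def prank {p n d : ℕ} (T : Tensor p n d) : ℕ :=
  sInf {r | ∃ f : Fin r → Tensor p n d, (∀ i, PRankOne (f i)) ∧ T = ∑ i, f i}

/-
A tensor of partition rank at most `r` is a sum of exactly `r` tensors of the form
`x ↦ T₁(x_A) · T₂(x_{Aᶜ})` with `∅ ≠ A ≠ {1,…,d}` (pad with `T₁ = 0`), so the tensors of
partition rank at most `r` are parametrised by `r`-tuples of triples `(A, T₁, T₂)`. There are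
fewer than `2^d` choices of `A`, and for `|A| = a` there are `p^(n^a) · p^(n^(d-a))` pairs
`(T₁, T₂)`. Since `n^a + n^(d-a) ≤ n^(d-1) + n` for `1 ≤ a < d`, and `2^d ≤ p^d` with
`d + n ≤ n^2 ≤ n^(d-1)`, each triple ranges over at most `p^(2 n^(d-1))` values.
-/

open Finset

theorem MultilinearMap.natCard_eq_pow_pow {R ι : Type*} [CommSemiring R] [Fintype ι] (n : ℕ) :
    Nat.card (MultilinearMap R (fun _ : ι => Fin n → R) R) =
      Nat.card R ^ n ^ Fintype.card ι := by
  classical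
  rw [Nat.card_congr (Basis.multilinearMap (fun _ => Pi.basisFun R (Fin n))
    (Module.Basis.singleton Unit R)).equivFun.toEquiv, Nat.card_fun]
  simp

theorem Nat.pow_add_pow_le_pow_add_self {n a b : ℕ} (hn : 1 ≤ n) (ha : 1 ≤ a) (hb : 1 ≤ b) :
    n ^ a + n ^ b ≤ n ^ (a + b - 1) + n := by
  obtain ⟨k, rfl⟩ := Nat.exists_eq_add_of_le' ha
  obtain ⟨m, rfl⟩ := Nat.exists_eq_add_of_le' hb
  have hx : 1 ≤ n ^ k := Nat.one_le_pow _ _ hn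
  have hy : 1 ≤ n ^ m := Nat.one_le_pow _ _ hn
  have : n ^ k + n ^ m ≤ n ^ k * n ^ m + 1 := by nlinarith
  calc n ^ (k + 1) + n ^ (m + 1) = (n ^ k + n ^ m) * n := by ring
    _ ≤ (n ^ k * n ^ m + 1) * n := Nat.mul_le_mul_right n this
    _ = n ^ (k + 1 + (m + 1) - 1) + n := by
      rw [show k + 1 + (m + 1) - 1 = k + m + 1 by omega]; ring

abbrev MultilinearForm (p n : ℕ) (ι : Type*) :=
  MultilinearMap (ZMod p) (fun _ : ι => Fin n → ZMod p) (ZMod p)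

instance {p n : ℕ} {ι : Type*} [NeZero p] [Finite ι] : Finite (MultilinearForm p n ι) :=
  Module.finite_of_finite (ZMod p)

section PartitionRank

variable {p n d : ℕ}

noncomputable def partitionProduct (A : Finset (Fin d)) (T₁ : MultilinearForm p n A)
    (T₂ : MultilinearForm p n {i // i ∉ A}) : Tensor p n d :=
  ((LinearMap.mul' (ZMod p) (ZMod p)).compMultilinearMap (T₁.domCoprod T₂)).domDomCongr
    (Equiv.sumCompl (· ∈ A))

@[simp]
theorem partitionProduct_apply (A : Finset (Fin d)) (T₁ : MultilinearForm p n A)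
    (T₂ : MultilinearForm p n {i // i ∉ A}) (x : Fin d → Fin n → ZMod p) :
    partitionProduct A T₁ T₂ x = T₁ (fun i => x i) * T₂ (fun i => x i) := by
  simp [partitionProduct]

theorem prankOne_partitionProduct {A : Finset (Fin d)} (hA : A.Nonempty) (hAu : A ≠ univ)
    (T₁ : MultilinearForm p n A) (T₂ : MultilinearForm p n {i // i ∉ A}) :
    PRankOne (partitionProduct A T₁ T₂) :=
  ⟨A, hA, hAu, T₁, T₂, partitionProduct_apply A T₁ T₂⟩

noncomputable def monomialForm {ι : Type*} [Fintype ι] (c : ZMod p) (f : ι → Fin n) :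
    MultilinearForm p n ι :=
  (MultilinearMap.mkPiRing (ZMod p) ι c).compLinearMap fun i => LinearMap.proj (f i)

@[simp]
theorem monomialForm_apply {ι : Type*} [Fintype ι] (c : ZMod p) (f : ι → Fin n)
    (x : ι → Fin n → ZMod p) : monomialForm c f x = (∏ i, x i (f i)) * c := by
  simp [monomialForm]

theorem sum_monomialForm {ι : Type*} [Fintype ι] [DecidableEq ι] (T : MultilinearForm p n ι) :
    ∑ f : ι → Fin n, monomialForm (T fun i => Pi.single (f i) 1) f = T := by
  refine Module.Basis.ext_multilinear (fun _ => Pi.basisFun (ZMod p) (Fin n)) fun v => ?_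
  rw [_root_.sum_apply, sum_eq_single v]
  · simp
  · intro f _ hf
    obtain ⟨i, hi⟩ := Function.ne_iff.mp hf
    rw [monomialForm_apply, prod_eq_zero (mem_univ i) (by simp [Ne.symm hi]), zero_mul]
  · simp

theorem monomialForm_eq_partitionProduct (A : Finset (Fin d)) (c : ZMod p) (f : Fin d → Fin n) :
    monomialForm c f =
      partitionProduct A (monomialForm c fun i => f i) (monomialForm 1 fun i => f i) := by
  refine MultilinearMap.ext fun x => ?_
  simp only [monomialForm_apply, partitionProduct_apply, mul_one]
  rw [← prod_mul_prod_compl A, prod_subtype A (fun _ => Iff.rfl) (fun i => x i (f i)),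
    prod_subtype Aᶜ (fun _ => mem_compl) (fun i => x i (f i))]
  ring

abbrev ProperNonemptySubset (d : ℕ) := {A : Finset (Fin d) // A.Nonempty ∧ A ≠ univ}

theorem ProperNonemptySubset.nonempty (hd : 2 ≤ d) : Nonempty (ProperNonemptySubset d) :=
  have : Nontrivial (Fin d) := Fin.nontrivial_iff_two_le.2 hd
  ⟨⟨{⟨0, by omega⟩}, singleton_nonempty _, singleton_ne_univ _⟩⟩

theorem prankOne_monomialForm (hd : 2 ≤ d) (c : ZMod p) (f : Fin d → Fin n) :
    PRankOne (monomialForm c f) := by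
  obtain ⟨A⟩ := ProperNonemptySubset.nonempty hd
  rw [monomialForm_eq_partitionProduct A.1]
  exact prankOne_partitionProduct A.2.1 A.2.2 _ _

theorem exists_sum_prankOne (hd : 2 ≤ d) (T : Tensor p n d) :
    ∃ m, ∃ f : Fin m → Tensor p n d, (∀ i, PRankOne (f i)) ∧ T = ∑ i, f i := by
  classical
  let e := Fintype.equivFin (Fin d → Fin n)
  refine ⟨_, fun j => monomialForm (T fun i => Pi.single (e.symm j i) 1) (e.symm j),
    fun j => prankOne_monomialForm hd _ _, ?_⟩
  rw [e.symm.sum_comp (fun f => monomialForm (T fun i => Pi.single (f i) 1) f), sum_monomialForm]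

-- Without a decomposition, `prank T` would be the junk value `sInf ∅ = 0`.
theorem exists_prank_decomposition (hd : 2 ≤ d) (T : Tensor p n d) :
    ∃ f : Fin (prank T) → Tensor p n d, (∀ i, PRankOne (f i)) ∧ T = ∑ i, f i :=
  Nat.sInf_mem (exists_sum_prankOne hd T)

abbrev PRankOneData (p n d : ℕ) :=
  Σ A : ProperNonemptySubset d, MultilinearForm p n A.1 × MultilinearForm p n {i // i ∉ A.1}

noncomputable def PRankOneData.toTensor (D : PRankOneData p n d) : Tensor p n d :=
  partitionProduct D.1.1 D.2.1 D.2.2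

theorem prankOne_iff_exists_toTensor_eq {T : Tensor p n d} :
    PRankOne T ↔ ∃ D : PRankOneData p n d, D.toTensor = T := by
  constructor
  · rintro ⟨A, hA, hAu, T₁, T₂, hT⟩
    exact ⟨⟨⟨A, hA, hAu⟩, T₁, T₂⟩,
      MultilinearMap.ext fun x => by simp [PRankOneData.toTensor, hT]⟩
  · rintro ⟨⟨⟨A, hA, hAu⟩, T₁, T₂⟩, rfl⟩
    exact prankOne_partitionProduct hA hAu T₁ T₂

theorem exists_sum_toTensor_of_prank_le (hd : 2 ≤ d) {r : ℕ} {T : Tensor p n d}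
    (hT : prank T ≤ r) : ∃ g : Fin r → PRankOneData p n d, ∑ i, (g i).toTensor = T := by
  obtain ⟨f, hf, hTf⟩ := exists_prank_decomposition hd T
  choose D hD using fun i => prankOne_iff_exists_toTensor_eq.1 (hf i)
  obtain ⟨A⟩ := ProperNonemptySubset.nonempty hd
  obtain ⟨k, rfl⟩ := Nat.exists_eq_add_of_le hT
  have h0 : PRankOneData.toTensor (⟨A, 0, 0⟩ : PRankOneData p n d) = 0 :=
    MultilinearMap.ext fun x => by simp [PRankOneData.toTensor]
  refine ⟨Fin.append D fun _ => ⟨A, 0, 0⟩, ?_⟩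
  simp [Fin.sum_univ_add, hD, hTf, h0]

theorem ProperNonemptySubset.card_le : Nat.card (ProperNonemptySubset d) ≤ 2 ^ d :=
  (Finite.card_subtype_le _).trans_eq (by simp)

theorem ProperNonemptySubset.card_forms_le (A : ProperNonemptySubset d) (hn : 1 ≤ n) :
    Nat.card (MultilinearForm p n A.1 × MultilinearForm p n {i // i ∉ A.1}) ≤
      p ^ (n ^ (d - 1) + n) := by
  obtain ⟨A, hA, hAu⟩ := A
  have ha : 1 ≤ #A := hA.card_pos
  have hb : #A < d := by simpa using card_lt_card (ssubset_univ_iff.2 hAu)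
  rw [Nat.card_prod, MultilinearMap.natCard_eq_pow_pow, MultilinearMap.natCard_eq_pow_pow,
    Nat.card_zmod, Fintype.card_subtype_compl, Fintype.card_coe, Fintype.card_fin, ← pow_add]
  rcases Nat.eq_zero_or_pos p with rfl | hp
  · rw [zero_pow (by positivity)]
    exact Nat.zero_le _
  apply Nat.pow_le_pow_right hp
  simpa [show #A + (d - #A) - 1 = d - 1 by omega] using
    Nat.pow_add_pow_le_pow_add_self hn ha (show 1 ≤ d - #A by omega)

theorem card_prankOneData_le (hp : 2 ≤ p) (hd : 3 ≤ d) (hnd : d ≤ n) :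
    Nat.card (PRankOneData p n d) ≤ p ^ (2 * n ^ (d - 1)) := by
  have : NeZero p := ⟨by omega⟩
  have hnn : n * n ≤ n ^ (d - 1) := by
    rw [← sq]; exact Nat.pow_le_pow_right (by omega) (by omega)
  calc Nat.card (PRankOneData p n d)
      ≤ Nat.card (ProperNonemptySubset d) * p ^ (n ^ (d - 1) + n) := by
        classical
        rw [Nat.card_sigma, Nat.card_eq_fintype_card, ← smul_eq_mul]
        exact sum_le_card_nsmul _ _ _ fun A _ => A.card_forms_le (by omega)
    _ ≤ p ^ d * p ^ (n ^ (d - 1) + n) :=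
        Nat.mul_le_mul_right _ (ProperNonemptySubset.card_le.trans (Nat.pow_le_pow_left hp d))
    _ ≤ p ^ (2 * n ^ (d - 1)) := by
        rw [← pow_add]
        exact Nat.pow_le_pow_right (by omega) (by nlinarith)

end PartitionRank

/-- Let `p` be a prime and `n ≥ d ≥ 3`. The number of `d`-tensors on `𝔽_p^n` of partition
rank at most `r` is at most `p^(2·n^(d-1)·r)`. -/
theorem stmt2 (p n d r : ℕ) [hp : Fact p.Prime] (hd : 3 ≤ d) (hnd : d ≤ n) :
    Nat.card {T : Tensor p n d // prank T ≤ r} ≤ p ^ (2 * n ^ (d - 1) * r) := by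
  let Ψ : (Fin r → PRankOneData p n d) → Tensor p n d := fun g => ∑ i, (g i).toTensor
  have hrange : {T : Tensor p n d | prank T ≤ r} ⊆ Set.range Ψ := fun T hT =>
    exists_sum_toTensor_of_prank_le (by omega) hT
  calc Nat.card {T : Tensor p n d // prank T ≤ r}
      ≤ Nat.card (Set.range Ψ) := Nat.card_mono (Set.finite_range Ψ) hrange
    _ ≤ Nat.card (Fin r → PRankOneData p n d) := Finite.card_range_le Ψ
    _ = Nat.card (PRankOneData p n d) ^ r := by simp [Nat.card_fun]
    _ ≤ (p ^ (2 * n ^ (d - 1))) ^ r :=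
        Nat.pow_le_pow_left (card_prankOneData_le hp.out.two_le hd hnd) r
    _ = p ^ (2 * n ^ (d - 1) * r) := (pow_mul _ _ _).symm
end

section
/- Let p be a prime, d ≥ 1 and n ≥ 1 integers, and s a positive integer. Let U be any subspace of 𝔽_p^{binom(n+d-1, d)} of dimension at least s − 1 whose intersection with the image of φ_d has maximal size among subspaces of dimension s − 1, and let x_1, …, x_s be independent uniformly distributed random vectors in 𝔽_p^n. Then the probability that φ_d(x_1), …, φ_d(x_s) are linearly independent over 𝔽_p is at least (1 − P_{x ∈ 𝔽_p^n}[φ_d(x) ∈ U])^s, where x is uniform on 𝔽_p^n. -/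
/-- The degree-`d` Veronese map `𝔽_p^n → 𝔽_p^(binom(n+d-1,d))`, sending `x` to the vector of
all degree-`d` monomials in the coordinates of `x`, one coordinate for each multiset of size
`d` from `{1,…,n}`. -/
def veronese (p n d : ℕ) (x : Fin n → ZMod p) : Sym (Fin n) d → ZMod p :=
  fun m => ((m : Multiset (Fin n)).map x).prod

/-!
Let `A` be the number of `x` with `φ_d(x) ∈ U`. Since `φ_d(x) = 0` only for `x = 0` and the
other fibres of `φ_d` are orbits of the `d`-th roots of unity, the number of `x` with
`φ_d(x) ∈ W` grows with `|W ∩ im φ_d|`. Every subspace of dimension `< s` lies in one of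
dimension `s - 1`, so by the maximality of `U` it contains at most `A` of the points `φ_d(x)`.
Choosing `x_1, …, x_s` one at a time, `x_{k+1}` only has to avoid the preimage of the span of
`φ_d(x_1), …, φ_d(x_k)`, which leaves at least `p^n - A` choices.
-/

open Module Submodule

theorem Submodule.exists_le_finrank_eq {K V : Type*} [Field K] [AddCommGroup V] [Module K V]
    [FiniteDimensional K V] (W : Submodule K V) {k : ℕ} (hWk : finrank K W ≤ k)
    (hk : k ≤ finrank K V) : ∃ W' : Submodule K V, W ≤ W' ∧ finrank K W' = k := by
  obtain ⟨j, rfl⟩ := Nat.exists_eq_add_of_le hWk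
  induction j generalizing W with
  | zero => exact ⟨W, le_rfl, rfl⟩
  | succ j ih =>
    have hW : W ≠ ⊤ := fun h => by
      rw [eq_top_iff_finrank_eq] at h
      omega
    obtain ⟨v, -, hv⟩ := SetLike.exists_of_lt hW.lt_top
    obtain ⟨W', hle, hrank⟩ :=
      ih (W ⊔ span K {v}) (by rw [finrank_sup_span_singleton hv]; omega)
        (by rw [finrank_sup_span_singleton hv]; omega)
    exact ⟨W', le_sup_left.trans hle, by rw [hrank, finrank_sup_span_singleton hv]; ring⟩

section LinearIndependentTuples

variable {K V X : Type*} [Field K] [AddCommGroup V] [Module K V] [Fintype X] (φ : X → V)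

theorem card_sigma_notMem_span_le_card_linearIndependent (k : ℕ) :
    Nat.card (Σ g : {g : Fin k → X // LinearIndependent K fun i => φ (g i)},
        {x // φ x ∉ span K (Set.range fun i => φ (g.1 i))}) ≤
      Nat.card {f : Fin (k + 1) → X // LinearIndependent K fun i => φ (f i)} := by
  refine Nat.card_le_card_of_injective
    (fun gx => ⟨(Fin.cons gx.2.1 gx.1.1 : Fin (k + 1) → X), ?_⟩) ?_
  · have hcons : (fun i => φ ((Fin.cons gx.2.1 gx.1.1 : Fin (k + 1) → X) i)) =
        Fin.cons (φ gx.2.1) fun i => φ (gx.1.1 i) := by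
      ext i
      cases i using Fin.cases <;> rfl
    rw [hcons, linearIndependent_finCons]
    exact ⟨gx.1.2, gx.2.2⟩
  · rintro ⟨⟨g, _⟩, ⟨x, _⟩⟩ ⟨⟨g', _⟩, ⟨x', _⟩⟩ h
    have hval : (Fin.cons x g : Fin (k + 1) → X) = Fin.cons x' g' := congrArg Subtype.val h
    obtain ⟨rfl, rfl⟩ := Fin.cons_inj.mp hval
    rfl

theorem pow_card_sub_le_card_linearIndependent {s B : ℕ}
    (hB : ∀ W : Submodule K V, finrank K W < s → Nat.card {x // φ x ∈ W} ≤ B)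
    {k : ℕ} (hk : k ≤ s) : (Nat.card X - B) ^ k ≤
      Nat.card {f : Fin k → X // LinearIndependent K fun i => φ (f i)} := by
  classical
  induction k with
  | zero =>
    have : Nonempty {f : Fin 0 → X // LinearIndependent K fun i => φ (f i)} :=
      ⟨⟨finZeroElim, linearIndependent_empty_type⟩⟩
    simp
  | succ k ih =>
    have hfiber (g : {g : Fin k → X // LinearIndependent K fun i => φ (g i)}) :
        Nat.card X - B ≤ Nat.card {x // φ x ∉ span K (Set.range fun i => φ (g.1 i))} := by
      have hrank : finrank K (span K (Set.range fun i => φ (g.1 i))) < s :=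
        (finrank_range_le_card (R := K) _).trans_lt (by simpa using hk)
      have hcompl :=
        Fintype.card_subtype_compl fun x => φ x ∈ span K (Set.range fun i => φ (g.1 i))
      simp only [← Nat.card_eq_fintype_card] at hcompl
      rw [hcompl]
      exact Nat.sub_le_sub_left (hB _ hrank) _
    calc (Nat.card X - B) ^ (k + 1) = (Nat.card X - B) ^ k * (Nat.card X - B) := pow_succ _ _
      _ ≤ Nat.card {g : Fin k → X // LinearIndependent K fun i => φ (g i)} *
            (Nat.card X - B) :=
        Nat.mul_le_mul_right _ (ih (by omega))
      _ = ∑ _g : {g : Fin k → X // LinearIndependent K fun i => φ (g i)},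
            (Nat.card X - B) := by
        simp [Nat.card_eq_fintype_card]
      _ ≤ ∑ g : {g : Fin k → X // LinearIndependent K fun i => φ (g i)},
            Nat.card {x // φ x ∉ span K (Set.range fun i => φ (g.1 i))} :=
        Finset.sum_le_sum fun g _ => hfiber g
      _ = _ := Nat.card_sigma.symm
      _ ≤ _ := card_sigma_notMem_span_le_card_linearIndependent φ k

end LinearIndependentTuples

section Veronese

variable {p n d : ℕ}

theorem veronese_smul (c : ZMod p) (x : Fin n → ZMod p) :
    veronese p n d (c • x) = c ^ d • veronese p n d x := by
  ext m
  simp only [veronese, Pi.smul_apply, smul_eq_mul]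
  rw [Multiset.prod_map_mul, Multiset.map_const', Multiset.prod_replicate, Sym.card_coe]

theorem veronese_replicate_add_singleton (x : Fin n → ZMod p) (i j : Fin n) :
    veronese p n (d + 1) x ⟨Multiset.replicate d i + {j}, by simp⟩ = x i ^ d * x j := by
  simp [veronese, Multiset.map_replicate, Multiset.prod_replicate]

theorem veronese_replicate (x : Fin n → ZMod p) (i : Fin n) :
    veronese p n d x ⟨Multiset.replicate d i, Multiset.card_replicate d i⟩ = x i ^ d := by
  simp [veronese, Multiset.map_replicate, Multiset.prod_replicate]

variable [Fact p.Prime]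

theorem veronese_eq_zero_iff (hd : d ≠ 0) {x : Fin n → ZMod p} :
    veronese p n d x = 0 ↔ x = 0 := by
  refine ⟨fun h => funext fun i => ?_, ?_⟩
  · have hi := congrFun h ⟨Multiset.replicate d i, Multiset.card_replicate d i⟩
    rw [veronese_replicate] at hi
    exact pow_eq_zero_iff hd |>.mp hi
  · rintro rfl
    simpa [hd] using veronese_smul (d := d) (0 : ZMod p) 0

/-- Comparing the monomials `x_i^(d+1)` and `x_i^d x_j` at a coordinate with `x_i ≠ 0` shows
that `y = (y_i / x_i) • x`. -/
theorem veronese_eq_veronese_iff {x : Fin n → ZMod p} (hx : x ≠ 0) {y : Fin n → ZMod p} :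
    veronese p n (d + 1) y = veronese p n (d + 1) x ↔
      ∃ c : ZMod p, c ^ (d + 1) = 1 ∧ y = c • x := by
  refine ⟨fun h => ?_, ?_⟩
  · obtain ⟨i, hxi⟩ : ∃ i, x i ≠ 0 := Function.ne_iff.mp hx
    have hpow : y i ^ (d + 1) = x i ^ (d + 1) := by
      simpa only [veronese_replicate] using
        congrFun h ⟨Multiset.replicate (d + 1) i, Multiset.card_replicate _ i⟩
    have hmixed (j : Fin n) : y i ^ d * y j = x i ^ d * x j := by
      simpa only [veronese_replicate_add_singleton] using
        congrFun h ⟨Multiset.replicate d i + {j}, by simp⟩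
    have hyi : y i ≠ 0 := fun h0 =>
      pow_ne_zero (d + 1) hxi (by rw [← hpow, h0, zero_pow d.succ_ne_zero])
    refine ⟨y i / x i, by rw [div_pow, hpow, div_self (pow_ne_zero _ hxi)], funext fun j => ?_⟩
    have hcross : y j * x i = y i * x j := by
      apply mul_left_cancel₀ (pow_ne_zero d hyi)
      linear_combination x i * hmixed j - x j * hpow
    simp only [Pi.smul_apply, smul_eq_mul]
    field_simp
    linear_combination hcross
  · rintro ⟨c, hc, rfl⟩
    rw [veronese_smul, hc, one_smul]

theorem card_veronese_fiber (hd : d ≠ 0) {x : Fin n → ZMod p} :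
    Nat.card {y // veronese p n d y = veronese p n d x} =
      if x = 0 then 1 else Nat.card {c : ZMod p // c ^ d = 1} := by
  obtain ⟨d, rfl⟩ := Nat.exists_eq_succ_of_ne_zero hd
  split_ifs with hx
  · subst hx
    rw [Nat.card_eq_one_iff_exists]
    refine ⟨⟨0, rfl⟩, fun y => Subtype.ext ?_⟩
    exact (veronese_eq_zero_iff hd).mp (y.2.trans ((veronese_eq_zero_iff hd).mpr rfl))
  · obtain ⟨i, hxi⟩ : ∃ i, x i ≠ 0 := Function.ne_iff.mp hx
    refine (Nat.card_eq_of_bijective (fun c =>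
      ⟨c.1 • x, (veronese_eq_veronese_iff hx).mpr ⟨c.1, c.2, rfl⟩⟩) ⟨?_, ?_⟩).symm
    · rintro ⟨c, _⟩ ⟨c', _⟩ h
      exact Subtype.ext (mul_right_cancel₀ hxi (congrFun (congrArg Subtype.val h) i))
    · rintro ⟨y, hy⟩
      obtain ⟨c, hc, rfl⟩ := (veronese_eq_veronese_iff hx).mp hy
      exact ⟨⟨c, hc⟩, rfl⟩

theorem card_veronese_preimage (hd : d ≠ 0) {S : Set (Sym (Fin n) d → ZMod p)} (h0 : 0 ∈ S) :
    Nat.card {x // veronese p n d x ∈ S} =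
      (Nat.card {v // v ∈ S ∧ v ∈ Set.range (veronese p n d)} - 1) *
        Nat.card {c : ZMod p // c ^ d = 1} + 1 := by
  classical
  set T := {v // v ∈ S ∧ v ∈ Set.range (veronese p n d)}
  set r := Nat.card {c : ZMod p // c ^ d = 1}
  let zero : T := ⟨0, h0, 0, (veronese_eq_zero_iff hd).mpr rfl⟩
  calc Nat.card {x // veronese p n d x ∈ S}
      = Nat.card (Σ v : T, {x // veronese p n d x = v}) :=
        (Nat.card_congr (Equiv.sigmaSubtypeFiberEquivSubtype (veronese p n d)
          fun x => (and_iff_left (Set.mem_range_self x)).symm)).symm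
    _ = ∑ v : T, if (v : Sym (Fin n) d → ZMod p) = 0 then 1 else r := by
        rw [Nat.card_sigma]
        refine Finset.sum_congr rfl fun ⟨v, _, x, hx⟩ _ => ?_
        subst hx
        simp only [card_veronese_fiber hd, veronese_eq_zero_iff hd, r]
    _ = (Nat.card T - 1) * r + 1 := by
        rw [Fintype.sum_eq_add_sum_compl zero, if_pos rfl, add_comm]
        congr 1
        rw [Finset.sum_congr rfl fun v hv => if_neg fun h => Finset.mem_compl.mp hv
          (Finset.mem_singleton.mpr (Subtype.ext h)), Finset.sum_const, Finset.card_compl,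
          Finset.card_singleton, smul_eq_mul, Nat.card_eq_fintype_card]

theorem card_veronese_preimage_le (hd : d ≠ 0) {S S' : Set (Sym (Fin n) d → ZMod p)}
    (h0 : 0 ∈ S) (h0' : 0 ∈ S')
    (h : Nat.card {v // v ∈ S ∧ v ∈ Set.range (veronese p n d)} ≤
      Nat.card {v // v ∈ S' ∧ v ∈ Set.range (veronese p n d)}) :
    Nat.card {x // veronese p n d x ∈ S} ≤ Nat.card {x // veronese p n d x ∈ S'} := by
  rw [card_veronese_preimage hd h0, card_veronese_preimage hd h0']
  gcongr

end Veronese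

theorem stmt7_general (p n d s : ℕ) [hp : Fact p.Prime] (hd : 1 ≤ d)
    (U : Submodule (ZMod p) (Sym (Fin n) d → ZMod p))
    (hdim : s - 1 ≤ Module.finrank (ZMod p) U)
    (hmax : ∀ W : Submodule (ZMod p) (Sym (Fin n) d → ZMod p),
      Module.finrank (ZMod p) W = s - 1 →
      Nat.card {v : Sym (Fin n) d → ZMod p // v ∈ W ∧ v ∈ Set.range (veronese p n d)} ≤
        Nat.card {v : Sym (Fin n) d → ZMod p // v ∈ U ∧ v ∈ Set.range (veronese p n d)}) :
    (1 - (Nat.card {x : Fin n → ZMod p // veronese p n d x ∈ U} : ℝ)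
          / (Fintype.card (Fin n → ZMod p) : ℝ)) ^ s ≤
      (Nat.card {f : Fin s → (Fin n → ZMod p) //
          LinearIndependent (ZMod p) (fun i : Fin s => veronese p n d (f i))} : ℝ)
        / (Fintype.card (Fin s → (Fin n → ZMod p)) : ℝ) := by
  set φ := veronese p n d
  set N := Fintype.card (Fin n → ZMod p)
  set A := Nat.card {x : Fin n → ZMod p // φ x ∈ U}
  have hbound (W : Submodule (ZMod p) (Sym (Fin n) d → ZMod p))
      (hW : Module.finrank (ZMod p) W < s) : Nat.card {x // φ x ∈ W} ≤ A := by
    obtain ⟨W', hWW', hW'⟩ := W.exists_le_finrank_eq (k := s - 1) (by omega)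
      (hdim.trans U.finrank_le)
    calc Nat.card {x // φ x ∈ W} ≤ Nat.card {x // φ x ∈ W'} :=
          Nat.card_mono (Set.toFinite _) fun _ hx => hWW' hx
      _ ≤ A := card_veronese_preimage_le (by omega) W'.zero_mem U.zero_mem (hmax W' hW')
  have hcount := pow_card_sub_le_card_linearIndependent φ hbound le_rfl
  rw [Nat.card_eq_fintype_card] at hcount
  have hN : (0 : ℝ) < N := by exact_mod_cast Fintype.card_pos
  have hAN : A ≤ N := (Finite.card_subtype_le _).trans_eq Nat.card_eq_fintype_card
  calc (1 - (A : ℝ) / N) ^ s = ((N - A : ℕ) : ℝ) ^ s / (N : ℝ) ^ s := by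
        rw [Nat.cast_sub hAN, ← div_pow, sub_div, div_self hN.ne']
    _ ≤ _ := by
        rw [Fintype.card_fun, Fintype.card_fin, Nat.cast_pow]
        gcongr
        exact_mod_cast hcount

/-- Let `U` be a subspace of `𝔽_p^(binom(n+d-1,d))` of dimension at least `s − 1` whose
intersection with the image of `φ_d` has maximal size among subspaces of dimension `s − 1`.
For `x_1, …, x_s` independent uniform in `𝔽_p^n`, the probability that
`φ_d(x_1), …, φ_d(x_s)` are linearly independent is at least
`(1 − P_x[φ_d(x) ∈ U])^s`. -/
theorem stmt7 (p n d s : ℕ) [hp : Fact p.Prime] (hd : 1 ≤ d) (hn : 1 ≤ n) (hs : 0 < s)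
    (U : Submodule (ZMod p) (Sym (Fin n) d → ZMod p))
    (hdim : s - 1 ≤ Module.finrank (ZMod p) U)
    (hmax : ∀ W : Submodule (ZMod p) (Sym (Fin n) d → ZMod p),
      Module.finrank (ZMod p) W = s - 1 →
      Nat.card {v : Sym (Fin n) d → ZMod p // v ∈ W ∧ v ∈ Set.range (veronese p n d)} ≤
        Nat.card {v : Sym (Fin n) d → ZMod p // v ∈ U ∧ v ∈ Set.range (veronese p n d)}) :
    (1 - (Nat.card {x : Fin n → ZMod p // veronese p n d x ∈ U} : ℝ)
          / (Fintype.card (Fin n → ZMod p) : ℝ)) ^ s ≤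
      (Nat.card {f : Fin s → (Fin n → ZMod p) //
          LinearIndependent (ZMod p) (fun i : Fin s => veronese p n d (f i))} : ℝ)
        / (Fintype.card (Fin s → (Fin n → ZMod p)) : ℝ) :=
  stmt7_general p n d s (hp := hp) hd U hdim hmax
end

section
/- Let p be a prime, n ≥ d ≥ 3 integers, and χ : 𝔽_p → ℂ a nontrivial additive character. Let U^⊥ be any 𝔽_p-linear space of d-tensors on 𝔽_p^n, and let r_0 ≥ 0 and r ≥ 0 be such that every d-tensor T with arank(T) ≤ r_0 satisfies prank(T) ≤ r. Then E_{T ∈ U^⊥} p^{−arank(T)/2^{d-1}} ≤ p^{2·n^{d-1}·r − dim U^⊥} + p^{−r_0/2^{d-1}}, where T is uniform on U^⊥. -/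
/-- The bias of a `d`-tensor `T` with respect to a nontrivial additive character `χ`:
`bias(T) = E_{x_1,…,x_d ∈ 𝔽_p^n} χ(T(x_1,…,x_d))` (a nonnegative real number, recorded here
via the real part). -/
noncomputable def bias {p n d : ℕ} [NeZero p] (T : Tensor p n d)
    (χ : AddChar (ZMod p) ℂ) : ℂ :=
  (∑ x : Fin d → (Fin n → ZMod p), χ (T x)) / (Fintype.card (Fin d → (Fin n → ZMod p)) : ℂ)

/-- The analytic rank of a `d`-tensor: `arank(T) = −log_p bias(T)`. -/
noncomputable def arank {p n d : ℕ} [NeZero p] (T : Tensor p n d)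
    (χ : AddChar (ZMod p) ℂ) : ℝ :=
  - Real.logb p (bias T χ).re

noncomputable instance {p n d : ℕ} [NeZero p] : Fintype (Tensor p n d) :=
  Fintype.ofInjective (fun T x => T x)
    (fun _ _ h => MultilinearMap.ext fun x => congrFun h x)

attribute [local instance] Classical.propDecidable

/-!
Split the average according to whether `arank T ≤ r₀`. Every term is at most `1`, and a term
with `arank T > r₀` is at most `p^(-r₀/2^(d-1))`. The tensors of the first kind have partition
rank at most `⌊r⌋`, and a tensor of partition rank at most `k` is a sum of exactly `k` tensors of
partition rank one (pad with zeros). A tensor of partition rank one is determined by a proper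
nonempty `A ⊆ [d]` and two forms in `|A|` and `d - |A|` variables, so there are at most
`2^d · p^(n + n^(d-1)) ≤ p^(2 n^(d-1))` of them. Hence at most `p^(2 n^(d-1) r)` terms are of the
first kind, and dividing by `|U^⊥| = p^(dim U^⊥)` gives the first summand.
-/

theorem natCard_multilinearMap (R : Type*) [CommSemiring R] (n : ℕ) (ι : Type*) [Finite ι] :
    Nat.card (MultilinearMap R (fun _ : ι => Fin n → R) R) = Nat.card R ^ n ^ Nat.card ι := by
  rw [Nat.card_congr (Basis.multilinearMap (fun _ => Pi.basisFun R (Fin n))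
    (Module.Basis.singleton Unit R)).equivFun.toEquiv, Nat.card_fun, Nat.card_prod,
    Nat.card_unique (α := Unit), mul_one, Nat.card_fun, Nat.card_fin]

theorem Finset.singleton_ne_univ_of_two_le_card {α : Type*} [Fintype α]
    (h : 2 ≤ Fintype.card α) (a : α) : ({a} : Finset α) ≠ Finset.univ := by
  intro ha
  have := congrArg Finset.card ha
  rw [Finset.card_singleton, Finset.card_univ] at this
  omega

theorem natCard_subtype_le_of_subset_range {α β : Type*} [Finite α] {P : β → Prop} (f : α → β)
    (h : {b | P b} ⊆ Set.range f) : Nat.card {b // P b} ≤ Nat.card α :=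
  (Nat.card_mono (Set.finite_range f) h).trans (Finite.card_range_le f)

theorem natCard_subtype_subtype_le {β : Type*} [Finite β] (S P : β → Prop) :
    Nat.card {x : {b // S b} // P x.1} ≤ Nat.card {b // P b} :=
  Nat.card_le_card_of_injective (fun x => ⟨x.1.1, x.2⟩) fun x y hxy => by
    have hval := congrArg Subtype.val hxy
    exact Subtype.val_injective (Subtype.val_injective hval)

theorem exists_fin_sum_eq_of_le {M : Type*} [AddCommMonoid M] {S : M → Prop} (h0 : S 0)
    {m k : ℕ} (hmk : m ≤ k) (g : Fin m → M) (hg : ∀ i, S (g i)) :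
    ∃ f : Fin k → M, (∀ i, S (f i)) ∧ ∑ i, f i = ∑ i, g i := by
  obtain ⟨l, rfl⟩ := Nat.exists_eq_add_of_le hmk
  refine ⟨Fin.append g 0, fun i => ?_, by simp [Fin.sum_univ_add]⟩
  exact Fin.addCases (by simpa using hg) (fun _ => by simpa using h0) i

theorem sum_le_natCard_add_natCard_mul {α : Type*} [Fintype α] {f : α → ℝ} {P : α → Prop}
    {c : ℝ} (hP : ∀ a, P a → f a ≤ 1) (hnP : ∀ a, ¬ P a → f a ≤ c) (hc : 0 ≤ c) :
    ∑ a, f a ≤ Nat.card {a // P a} + Nat.card α * c := by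
  rw [← Finset.sum_filter_add_sum_filter_not Finset.univ P, Nat.card_eq_fintype_card,
    Fintype.card_subtype, Nat.card_eq_fintype_card, ← Finset.card_univ]
  gcongr
  · simpa using Finset.sum_le_card_nsmul _ _ 1 fun a ha => hP a (Finset.mem_filter.mp ha).2
  · calc _ ≤ (Finset.univ.filter fun a => ¬ P a).card • c :=
          Finset.sum_le_card_nsmul _ _ c fun a ha => hnP a (Finset.mem_filter.mp ha).2
      _ ≤ (Finset.univ : Finset α).card * c := by
          rw [nsmul_eq_mul]
          gcongr
          exact Finset.filter_subset _ _

theorem pow_add_pow_sub_le {n a d : ℕ} (hn : 1 ≤ n) (ha : 1 ≤ a) (had : a < d) :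
    n ^ a + n ^ (d - a) ≤ n + n ^ (d - 1) := by
  have hu : 1 ≤ n ^ (a - 1) := Nat.one_le_pow _ _ hn
  have hv : n ≤ n ^ (d - a) := Nat.le_self_pow (by omega) n
  have ha' : n ^ a = n * n ^ (a - 1) := by rw [← pow_succ']; congr 1; omega
  have hd' : n ^ (d - 1) = n ^ (a - 1) * n ^ (d - a) := by rw [← pow_add]; congr 1; omega
  rw [ha', hd']
  -- the difference of the two sides is `(n ^ (a - 1) - 1) * (n ^ (d - a) - n)`
  nlinarith [Nat.mul_le_mul (Nat.sub_le_sub_right hu 1) (Nat.sub_le_sub_right hv n)]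

theorem two_pow_mul_pow_le {p n d : ℕ} (hp : 2 ≤ p) (hd : 3 ≤ d) (hnd : d ≤ n) :
    2 ^ d * p ^ (n + n ^ (d - 1)) ≤ p ^ (2 * n ^ (d - 1)) := by
  have hsq : n ^ 2 ≤ n ^ (d - 1) := Nat.pow_le_pow_right (by omega) (by omega)
  calc 2 ^ d * p ^ (n + n ^ (d - 1)) ≤ p ^ d * p ^ (n + n ^ (d - 1)) := by gcongr
    _ = p ^ (d + n + n ^ (d - 1)) := by rw [← pow_add, add_assoc]
    _ ≤ p ^ (2 * n ^ (d - 1)) := Nat.pow_le_pow_right (by omega) (by nlinarith)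

abbrev Form (p n : ℕ) (ι : Type) :=
  MultilinearMap (ZMod p) (fun _ : ι => (Fin n → ZMod p)) (ZMod p)

instance (p n : ℕ) [NeZero p] (ι : Type) [Finite ι] : Finite (Form p n ι) :=
  Module.finite_of_finite (ZMod p)

namespace Tensor

variable {p n d : ℕ}

noncomputable def splitMul (A : Finset (Fin d)) (T₁ : Form p n {i // i ∈ A})
    (T₂ : Form p n {i // i ∉ A}) : Tensor p n d :=
  ((LinearMap.mul' (ZMod p) (ZMod p)).compMultilinearMap (T₁.domCoprod T₂)).domDomCongr
    (Equiv.sumCompl (· ∈ A))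

@[simp]
theorem splitMul_apply (A : Finset (Fin d)) (T₁ : Form p n {i // i ∈ A})
    (T₂ : Form p n {i // i ∉ A}) (x : Fin d → Fin n → ZMod p) :
    splitMul A T₁ T₂ x = T₁ (fun i => x i.1) * T₂ (fun i => x i.1) := by
  simp [splitMul]

theorem prankOne_splitMul {A : Finset (Fin d)} (hA : A.Nonempty) (hA' : A ≠ Finset.univ)
    (T₁ : Form p n {i // i ∈ A}) (T₂ : Form p n {i // i ∉ A}) :
    PRankOne (splitMul A T₁ T₂) :=
  ⟨A, hA, hA', T₁, T₂, splitMul_apply A T₁ T₂⟩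

theorem exists_splitMul_of_prankOne {T : Tensor p n d} (hT : PRankOne T) :
    ∃ A : {A : Finset (Fin d) // A.Nonempty ∧ A ≠ Finset.univ},
      ∃ (T₁ : Form p n {i // i ∈ A.1}) (T₂ : Form p n {i // i ∉ A.1}),
        splitMul A.1 T₁ T₂ = T := by
  obtain ⟨A, hA, hA', T₁, T₂, hT⟩ := hT
  exact ⟨⟨A, hA, hA'⟩, T₁, T₂,
    MultilinearMap.ext fun x => (splitMul_apply A T₁ T₂ x).trans (hT x).symm⟩

theorem prankOne_zero (hd : 2 ≤ d) : PRankOne (0 : Tensor p n d) :=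
  ⟨{⟨0, by omega⟩}, Finset.singleton_nonempty _,
    Finset.singleton_ne_univ_of_two_le_card (by simpa using hd) _, 0, 0, fun x => by simp⟩

noncomputable def slice (T : Tensor p n d) (j : Fin d) (i : Fin n) : Tensor p n d :=
  splitMul {j} (MultilinearMap.ofSubsingleton _ _ _ ⟨j, Finset.mem_singleton_self j⟩
    (LinearMap.proj i)) (T.domDomRestrict (· ∉ ({j} : Finset (Fin d))) fun _ => Pi.single i 1)

theorem slice_apply (T : Tensor p n d) (j : Fin d) (i : Fin n) (x : Fin d → Fin n → ZMod p) :
    slice T j i x = x j i * T (Function.update x j (Pi.single i 1)) := by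
  simp only [slice, splitMul_apply, MultilinearMap.ofSubsingleton_apply_apply,
    MultilinearMap.domDomRestrict_apply, LinearMap.proj_apply]
  congr 2 with k
  rcases eq_or_ne k j with rfl | hk
  · simp
  · simp [hk]

theorem sum_slice (T : Tensor p n d) (j : Fin d) : ∑ i, slice T j i = T := by
  refine MultilinearMap.ext fun x => ?_
  have hx : x j = ∑ i, x j i • (Pi.single i 1 : Fin n → ZMod p) := by
    simpa using ((Pi.basisFun (ZMod p) (Fin n)).sum_repr (x j)).symm
  conv_rhs => rw [← Function.update_eq_self j x, hx, MultilinearMap.map_update_sum]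
  simp only [FunLike.coe_sum, Finset.sum_apply, slice_apply, MultilinearMap.map_update_smul,
    smul_eq_mul]

theorem prankOne_slice (hd : 2 ≤ d) (T : Tensor p n d) (j : Fin d) (i : Fin n) :
    PRankOne (slice T j i) :=
  prankOne_splitMul (Finset.singleton_nonempty j)
    (Finset.singleton_ne_univ_of_two_le_card (by simpa using hd) j) _ _

-- The slices make the set defining `prank T` nonempty, so its `sInf` is attained.
theorem exists_prankOne_sum_eq (hd : 2 ≤ d) (T : Tensor p n d) :
    ∃ f : Fin (prank T) → Tensor p n d, (∀ i, PRankOne (f i)) ∧ T = ∑ i, f i :=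
  Nat.sInf_mem (s := {r | ∃ f : Fin r → Tensor p n d, (∀ i, PRankOne (f i)) ∧ T = ∑ i, f i})
    ⟨n, slice T ⟨0, by omega⟩, prankOne_slice hd T _, (sum_slice T _).symm⟩

theorem exists_prankOne_sum_eq_of_prank_le (hd : 2 ≤ d) {T : Tensor p n d} {k : ℕ}
    (hk : prank T ≤ k) :
    ∃ f : Fin k → Tensor p n d, (∀ i, PRankOne (f i)) ∧ T = ∑ i, f i := by
  obtain ⟨g, hg, hT⟩ := exists_prankOne_sum_eq hd T
  obtain ⟨f, hf, hfg⟩ := exists_fin_sum_eq_of_le (prankOne_zero hd) hk g hg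
  exact ⟨f, hf, hT.trans hfg.symm⟩

theorem natCard_prankOne_le (hp : 2 ≤ p) (hd : 3 ≤ d) (hnd : d ≤ n) :
    Nat.card {T : Tensor p n d // PRankOne T} ≤ p ^ (2 * n ^ (d - 1)) := by
  have : NeZero p := ⟨by omega⟩
  calc Nat.card {T : Tensor p n d // PRankOne T}
      ≤ Nat.card (Σ A : {A : Finset (Fin d) // A.Nonempty ∧ A ≠ Finset.univ},
          Form p n {i // i ∈ A.1} × Form p n {i // i ∉ A.1}) :=
        natCard_subtype_le_of_subset_range (fun s => splitMul s.1.1 s.2.1 s.2.2) fun T hT => by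
          obtain ⟨A, T₁, T₂, h⟩ := exists_splitMul_of_prankOne hT
          exact ⟨⟨A, T₁, T₂⟩, h⟩
    _ = ∑ A : {A : Finset (Fin d) // A.Nonempty ∧ A ≠ Finset.univ},
          p ^ (n ^ A.1.card + n ^ (d - A.1.card)) := by
        rw [Nat.card_sigma]
        refine Finset.sum_congr rfl fun A _ => ?_
        simp [Nat.card_prod, natCard_multilinearMap, pow_add]
    _ ≤ ∑ _A : {A : Finset (Fin d) // A.Nonempty ∧ A ≠ Finset.univ}, p ^ (n + n ^ (d - 1)) := by
        refine Finset.sum_le_sum fun A _ => Nat.pow_le_pow_right (by omega) ?_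
        exact pow_add_pow_sub_le (by omega) (Finset.card_pos.mpr A.2.1)
          (by simpa using Finset.card_lt_card (Finset.ssubset_univ_iff.mpr A.2.2))
    _ ≤ 2 ^ d * p ^ (n + n ^ (d - 1)) := by
        rw [Finset.sum_const, Finset.card_univ, smul_eq_mul]
        gcongr
        calc Fintype.card {A : Finset (Fin d) // A.Nonempty ∧ A ≠ Finset.univ}
            ≤ Fintype.card (Finset (Fin d)) := Fintype.card_subtype_le _
          _ = 2 ^ d := by simp
    _ ≤ p ^ (2 * n ^ (d - 1)) := two_pow_mul_pow_le hp hd hnd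

theorem natCard_prank_le (hp : 2 ≤ p) (hd : 3 ≤ d) (hnd : d ≤ n) (k : ℕ) :
    Nat.card {T : Tensor p n d // prank T ≤ k} ≤ p ^ (2 * n ^ (d - 1) * k) := by
  have : NeZero p := ⟨by omega⟩
  calc Nat.card {T : Tensor p n d // prank T ≤ k}
      ≤ Nat.card (Fin k → {T : Tensor p n d // PRankOne T}) :=
        natCard_subtype_le_of_subset_range (fun f => ∑ i, (f i).1) fun T hT => by
          obtain ⟨f, hf, rfl⟩ := exists_prankOne_sum_eq_of_prank_le (by omega) hT
          exact ⟨fun i => ⟨f i, hf i⟩, rfl⟩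
    _ = Nat.card {T : Tensor p n d // PRankOne T} ^ k := by rw [Nat.card_fun, Nat.card_fin]
    _ ≤ (p ^ (2 * n ^ (d - 1))) ^ k := Nat.pow_le_pow_left (natCard_prankOne_le hp hd hnd) k
    _ = p ^ (2 * n ^ (d - 1) * k) := (pow_mul p _ k).symm

variable [NeZero p]

theorem abs_re_bias_le_one (T : Tensor p n d) (χ : AddChar (ZMod p) ℂ) :
    |(bias T χ).re| ≤ 1 := by
  refine (Complex.abs_re_le_norm _).trans ?_
  rw [bias, norm_div, Complex.norm_natCast, div_le_one (mod_cast Fintype.card_pos)]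
  calc ‖∑ x, χ (T x)‖ ≤ ∑ x, ‖χ (T x)‖ := norm_sum_le _ _
    _ = Fintype.card (Fin d → Fin n → ZMod p) := by simp

-- `Real.log` of a nonpositive real `x` is `log |x|`, so this holds without knowing `0 < bias T χ`.
theorem arank_nonneg (T : Tensor p n d) (χ : AddChar (ZMod p) ℂ) : 0 ≤ arank T χ := by
  rw [arank, neg_nonneg, Real.logb, ← Real.log_abs]
  exact div_nonpos_of_nonpos_of_nonneg
    (Real.log_nonpos (abs_nonneg _) (abs_re_bias_le_one T χ))
    (Real.log_nonneg (mod_cast NeZero.one_le))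

theorem natCard_arank_le_le (hp : 2 ≤ p) (hd : 3 ≤ d) (hnd : d ≤ n) {χ : AddChar (ZMod p) ℂ}
    {r₀ r : ℝ} (hr : 0 ≤ r) (h : ∀ T : Tensor p n d, arank T χ ≤ r₀ → (prank T : ℝ) ≤ r) :
    (Nat.card {T : Tensor p n d // arank T χ ≤ r₀} : ℝ)
      ≤ (p : ℝ) ^ (2 * (n : ℝ) ^ (d - 1) * r) := by
  calc (Nat.card {T : Tensor p n d // arank T χ ≤ r₀} : ℝ)
      ≤ Nat.card {T : Tensor p n d // prank T ≤ ⌊r⌋₊} :=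
        mod_cast Nat.card_mono (Set.toFinite _) fun T hT => Nat.le_floor (h T hT)
    _ ≤ (p : ℝ) ^ (2 * n ^ (d - 1) * ⌊r⌋₊) := mod_cast natCard_prank_le hp hd hnd ⌊r⌋₊
    _ ≤ (p : ℝ) ^ (2 * (n : ℝ) ^ (d - 1) * r) := by
        rw [← Real.rpow_natCast]
        gcongr
        · exact_mod_cast hp.trans' one_le_two
        · push_cast
          gcongr
          exact Nat.floor_le hr

end Tensor

theorem stmt11_general (p n d : ℕ) [hp : Fact p.Prime] (hd : 3 ≤ d) (hnd : d ≤ n)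
    (χ : AddChar (ZMod p) ℂ)
    (W : Submodule (ZMod p) (Tensor p n d)) (r₀ r : ℝ) (hr : 0 ≤ r)
    (h : ∀ T : Tensor p n d, arank T χ ≤ r₀ → (prank T : ℝ) ≤ r) :
    (∑ T : W, (p : ℝ) ^ (-(arank (T : Tensor p n d) χ) / 2 ^ (d - 1)))
        / (Nat.card W : ℝ)
      ≤ (p : ℝ) ^ (2 * (n : ℝ) ^ (d - 1) * r - (Module.finrank (ZMod p) W : ℝ))
        + (p : ℝ) ^ (-r₀ / 2 ^ (d - 1)) := by
  have hp1 : (1 : ℝ) < p := mod_cast hp.out.one_lt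
  have hW : (Nat.card W : ℝ) = (p : ℝ) ^ (Module.finrank (ZMod p) W : ℝ) := by
    rw [Module.natCard_eq_pow_finrank (K := ZMod p), Nat.card_zmod, Real.rpow_natCast, Nat.cast_pow]
  have hlow : (Nat.card {T : W // arank (T : Tensor p n d) χ ≤ r₀} : ℝ)
      ≤ (p : ℝ) ^ (2 * (n : ℝ) ^ (d - 1) * r) := by
    refine le_trans ?_ (Tensor.natCard_arank_le_le hp.out.two_le hd hnd hr h)
    exact_mod_cast natCard_subtype_subtype_le (· ∈ W) (fun T => arank T χ ≤ r₀)
  have hsum := sum_le_natCard_add_natCard_mul (α := W)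
    (f := fun T => (p : ℝ) ^ (-(arank (T : Tensor p n d) χ) / 2 ^ (d - 1)))
    (P := fun T => arank (T : Tensor p n d) χ ≤ r₀)
    (fun T _ => Real.rpow_le_one_of_one_le_of_nonpos hp1.le
      (div_nonpos_of_nonpos_of_nonneg (neg_nonpos.mpr (Tensor.arank_nonneg _ χ)) (by positivity)))
    (fun T hT => Real.rpow_le_rpow_of_exponent_le hp1.le
      (div_le_div_of_nonneg_right (neg_le_neg (not_le.mp hT).le) (by positivity)))
    (by positivity)
  have hWpos : (0 : ℝ) < Nat.card W := mod_cast Nat.card_pos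
  calc _ ≤ ((p : ℝ) ^ (2 * (n : ℝ) ^ (d - 1) * r)
          + Nat.card W * (p : ℝ) ^ (-r₀ / 2 ^ (d - 1))) / Nat.card W := by
        gcongr
        linarith
    _ = _ := by
        rw [Real.rpow_sub (by positivity), ← hW]
        field_simp

/-- Let `p` be prime, `n ≥ d ≥ 3`, `χ` a nontrivial additive character, and `W = U^⊥` any
`𝔽_p`-linear space of `d`-tensors on `𝔽_p^n`. If `r₀, r ≥ 0` are such that every `d`-tensor
with `arank(T) ≤ r₀` satisfies `prank(T) ≤ r`, then
`E_{T ∈ U^⊥} p^(−arank(T)/2^(d-1)) ≤ p^(2·n^(d-1)·r − dim U^⊥) + p^(−r₀/2^(d-1))`. -/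
theorem stmt11 (p n d : ℕ) [hp : Fact p.Prime] (hd : 3 ≤ d) (hnd : d ≤ n)
    (χ : AddChar (ZMod p) ℂ) (hχ : χ ≠ 1)
    (W : Submodule (ZMod p) (Tensor p n d)) (r₀ r : ℝ) (hr₀ : 0 ≤ r₀) (hr : 0 ≤ r)
    (h : ∀ T : Tensor p n d, arank T χ ≤ r₀ → (prank T : ℝ) ≤ r) :
    (∑ T : W, (p : ℝ) ^ (-(arank (T : Tensor p n d) χ) / 2 ^ (d - 1)))
        / (Nat.card W : ℝ)
      ≤ (p : ℝ) ^ (2 * (n : ℝ) ^ (d - 1) * r - (Module.finrank (ZMod p) W : ℝ))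
        + (p : ℝ) ^ (-r₀ / 2 ^ (d - 1)) :=
  stmt11_general p n d (hp := hp) hd hnd χ W r₀ r hr h
end

section
/- Let k ≥ 3 be an integer, p ≥ k a prime, and T a nonzero symmetric (k−1)-tensor on 𝔽_p^n. Then the set {x ∈ 𝔽_p^n : T(x, x, …, x) = 0} has size at least c·p^n for a constant c > 0 depending only on p and k. -/
open MvPolynomial

theorem Finsupp.card_support_le_sum {α : Type*} (t : α →₀ ℕ) :
    t.support.card ≤ t.sum fun _ e => e := by
  simpa [Finsupp.sum] using Finset.card_nsmul_le_sum t.support t 1 fun i hi =>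
    Nat.one_le_iff_ne_zero.2 (Finsupp.mem_support_iff.1 hi)

namespace FiniteField

def reduceExp (q j : ℕ) : ℕ := if j = 0 then 0 else (j - 1) % (q - 1) + 1

theorem reduceExp_zero (q : ℕ) : reduceExp q 0 = 0 := rfl

theorem reduceExp_le (q j : ℕ) : reduceExp q j ≤ j := by
  unfold reduceExp
  split_ifs
  · omega
  · have := Nat.mod_le (j - 1) (q - 1)
    omega

theorem reduceExp_lt {q : ℕ} (hq : 2 ≤ q) (j : ℕ) : reduceExp q j < q := by
  unfold reduceExp
  split_ifs
  · omega
  · have := Nat.mod_lt (j - 1) (show 0 < q - 1 by omega)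
    omega

theorem pow_reduceExp {M₀ : Type*} [GroupWithZero M₀] [Fintype M₀] (x : M₀) (j : ℕ) :
    x ^ reduceExp (Fintype.card M₀) j = x ^ j := by
  unfold reduceExp
  split_ifs with hj
  · rw [hj]
  rcases eq_or_ne x 0 with rfl | hx
  · rw [zero_pow (Nat.succ_ne_zero _), zero_pow hj]
  · conv_rhs => rw [← Nat.sub_one_add_one hj, ← Nat.mod_add_div (j - 1) (Fintype.card M₀ - 1)]
    rw [pow_succ, pow_succ, pow_add, pow_mul, pow_card_sub_one_eq_one x hx, one_pow, mul_one]

end FiniteField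

namespace MvPolynomial

open FiniteField

variable {K σ : Type*} [Field K] [Fintype K]

noncomputable def reduceExponents (g : MvPolynomial σ K) : MvPolynomial σ K :=
  ∑ m ∈ g.support,
    monomial (m.mapRange (reduceExp (Fintype.card K)) (reduceExp_zero _)) (coeff m g)

theorem eval_reduceExponents (g : MvPolynomial σ K) (x : σ → K) :
    eval x (reduceExponents g) = eval x g := by
  rw [reduceExponents, map_sum, eval_eq]
  refine Finset.sum_congr rfl fun m _ => ?_
  rw [eval_monomial, Finsupp.prod_mapRange_index fun _ => pow_zero _]
  simp only [pow_reduceExp]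
  rfl

theorem degreeOf_reduceExponents_lt (g : MvPolynomial σ K) (i : σ) :
    degreeOf i (reduceExponents g) < Fintype.card K := by
  refine lt_of_le_of_lt (degreeOf_sum_le _ _ _) ?_
  refine (Finset.sup_lt_iff (by simpa using Fintype.card_pos)).2 fun m _ => ?_
  refine (degreeOf_lt_iff Fintype.card_pos).2 fun m' hm' => ?_
  rw [Finset.mem_singleton.1 (support_monomial_subset hm'), Finsupp.mapRange_apply]
  exact reduceExp_lt Fintype.one_lt_card _

theorem totalDegree_reduceExponents_le (g : MvPolynomial σ K) :
    totalDegree (reduceExponents g) ≤ totalDegree g := by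
  refine le_trans (totalDegree_finsetSum _ _) (Finset.sup_le fun m hm => ?_)
  refine le_trans (totalDegree_monomial_le _ _) (le_trans ?_ (le_totalDegree hm))
  rw [Finsupp.sum_mapRange_index fun _ => rfl]
  exact Finsupp.sum_le_sum fun i _ => reduceExp_le _ (m i)

variable [Fintype σ]

theorem pow_card_sub_le_card_eval_ne_zero {g : MvPolynomial σ K} (hg : g ≠ 0)
    (hdeg : ∀ i, degreeOf i g < Fintype.card K) {D : ℕ} (hD : totalDegree g ≤ D) :
    Fintype.card K ^ (Fintype.card σ - D) ≤ Nat.card {x : σ → K // eval x g ≠ 0} := by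
  classical
  -- Over each assignment `a` of the variables missing from a top-degree monomial `t`, the
  -- Nullstellensatz on the box `∏ᵢ (if t i = 0 then {a i} else K)` finds a nonzero value.
  obtain ⟨t, ht, htop⟩ := Finset.exists_mem_eq_sup g.support (support_nonempty.2 hg)
    fun s => s.sum fun _ e => e
  have hsurj : Function.Surjective
      fun x : {x : σ → K // eval x g ≠ 0} => fun i : ↥t.supportᶜ => x.1 i := by
    intro a
    obtain ⟨x, hxS, hx⟩ := combinatorial_nullstellensatz_exists_eval_nonzero g t
      (mem_support_iff.1 ht) htop
      (fun i => if h : i ∈ t.supportᶜ then {a ⟨i, h⟩} else Finset.univ) fun i => by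
        split_ifs with h
        · simpa using h
        · exact (monomial_le_degreeOf i ht).trans_lt (hdeg i)
    refine ⟨⟨x, hx⟩, ?_⟩
    funext i
    simpa [i.2] using hxS i
  have hcard : Fintype.card σ - D ≤ t.supportᶜ.card := by
    have : t.support.card ≤ D := (t.card_support_le_sum).trans (htop ▸ hD)
    rw [Finset.card_compl]
    omega
  calc Fintype.card K ^ (Fintype.card σ - D)
      ≤ Fintype.card K ^ t.supportᶜ.card := Nat.pow_le_pow_right Fintype.card_pos hcard
    _ = Nat.card (↥t.supportᶜ → K) := by
        rw [Nat.card_fun, Nat.card_eq_finsetCard, Nat.card_eq_fintype_card]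
    _ ≤ _ := Nat.card_le_card_of_surjective _ hsurj

theorem pow_card_sub_le_card_eval_eq_zero {P : MvPolynomial σ K} {d : ℕ}
    (hP : totalDegree P ≤ d) {x₀ : σ → K} (hx₀ : eval x₀ P = 0) :
    Fintype.card K ^ (Fintype.card σ - d * (Fintype.card K - 1)) ≤
      Nat.card {x : σ → K // eval x P = 0} := by
  have hq : Fintype.card K - 1 ≠ 0 := by have := Fintype.one_lt_card (α := K); omega
  set g := 1 - reduceExponents (P ^ (Fintype.card K - 1))
  have heval (x : σ → K) : eval x g ≠ 0 ↔ eval x P = 0 := by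
    simp only [g, map_sub, map_one, eval_reduceExponents, map_pow]
    by_cases hx : eval x P = 0
    · simp [hx, zero_pow hq]
    · simp [hx, FiniteField.pow_card_sub_one_eq_one _ hx]
  have hg : g ≠ 0 := fun h => by simpa [h] using (heval x₀).2 hx₀
  have hdeg (i : σ) : degreeOf i g < Fintype.card K :=
    (degreeOf_sub_le _ _ _).trans_lt
      (max_lt (by simpa using Fintype.card_pos) (degreeOf_reduceExponents_lt _ i))
  have htot : totalDegree g ≤ d * (Fintype.card K - 1) := by
    refine (totalDegree_sub _ _).trans (max_le (by simp) ?_)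
    calc totalDegree (reduceExponents (P ^ (Fintype.card K - 1)))
        ≤ (Fintype.card K - 1) * totalDegree P :=
          (totalDegree_reduceExponents_le _).trans (totalDegree_pow _ _)
      _ ≤ d * (Fintype.card K - 1) := by rw [mul_comm]; exact Nat.mul_le_mul_right _ hP
  calc _ ≤ Nat.card {x : σ → K // eval x g ≠ 0} :=
        pow_card_sub_le_card_eval_ne_zero hg hdeg htot
    _ = _ := Nat.card_congr (Equiv.subtypeEquivRight heval)

end MvPolynomial

namespace MultilinearMap

variable {K ι σ : Type*} [CommRing K] [Fintype ι] [DecidableEq ι] [Fintype σ] [DecidableEq σ]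

noncomputable def diagonalPoly (f : MultilinearMap K (fun _ : ι => σ → K) K) :
    MvPolynomial σ K :=
  ∑ r : ι → σ, C (f fun i => Pi.single (r i) 1) * ∏ i, X (r i)

theorem eval_diagonalPoly (f : MultilinearMap K (fun _ : ι => σ → K) K) (x : σ → K) :
    eval x (diagonalPoly f) = f fun _ => x := by
  have hx : (fun _ : ι => x) = fun _ => ∑ j, x j • (Pi.single j 1 : σ → K) := by
    simp [← Pi.single_smul, Finset.univ_sum_single]
  rw [hx, f.map_sum, diagonalPoly, _root_.map_sum]
  refine Finset.sum_congr rfl fun r _ => ?_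
  rw [f.map_smul_univ, eval_mul, eval_C, map_prod]
  simp only [eval_X, smul_eq_mul]
  ring

theorem totalDegree_diagonalPoly_le (f : MultilinearMap K (fun _ : ι => σ → K) K) :
    totalDegree (diagonalPoly f) ≤ Fintype.card ι := by
  rcases subsingleton_or_nontrivial K with _ | _
  · simp [Subsingleton.elim (diagonalPoly f) 0]
  refine (totalDegree_finsetSum _ _).trans (Finset.sup_le fun r _ => ?_)
  refine (totalDegree_mul _ _).trans ?_
  rw [totalDegree_C, zero_add]
  refine (totalDegree_finsetProd _ _).trans ?_
  simp [totalDegree_X]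

end MultilinearMap

theorem stmt12_general (k p : ℕ) (hk : 3 ≤ k) [hp : Fact p.Prime] :
    ∃ c : ℝ, 0 < c ∧
      ∀ (n : ℕ) (T : Tensor p n (k - 1)), T ≠ 0 →
        (∀ (σ : Equiv.Perm (Fin (k - 1))) (v : Fin (k - 1) → (Fin n → ZMod p)),
          T (v ∘ σ) = T v) →
        c * (p : ℝ) ^ n ≤ (Nat.card {x : Fin n → ZMod p // T (fun _ => x) = 0} : ℝ) := by
  have hp1 : (1 : ℝ) ≤ p := by exact_mod_cast hp.out.one_lt.le
  refine ⟨((p : ℝ) ^ ((k - 1) * (p - 1)))⁻¹, by positivity, fun n T _ _ => ?_⟩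
  have hzero : eval 0 T.diagonalPoly = 0 := by
    rw [MultilinearMap.eval_diagonalPoly]
    exact T.map_coord_zero ⟨0, by omega⟩ rfl
  have hcount := pow_card_sub_le_card_eval_eq_zero
    (by simpa using T.totalDegree_diagonalPoly_le) hzero
  simp only [MultilinearMap.eval_diagonalPoly, ZMod.card, Fintype.card_fin] at hcount
  calc ((p : ℝ) ^ ((k - 1) * (p - 1)))⁻¹ * (p : ℝ) ^ n
      ≤ (p : ℝ) ^ (n - (k - 1) * (p - 1)) := by
        rw [inv_mul_le_iff₀ (by positivity), ← pow_add]
        exact pow_le_pow_right₀ hp1 (by omega)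
    _ ≤ _ := by exact_mod_cast hcount

/-- Let `k ≥ 3` be an integer and `p ≥ k` a prime. For every `n` and every nonzero symmetric
`(k−1)`-tensor `T` on `𝔽_p^n`, the set `{x ∈ 𝔽_p^n : T(x,…,x) = 0}` has size at least
`c·p^n` for a constant `c > 0` depending only on `p` and `k`. -/
theorem stmt12 (k p : ℕ) (hk : 3 ≤ k) [hp : Fact p.Prime] (hkp : k ≤ p) :
    ∃ c : ℝ, 0 < c ∧
      ∀ (n : ℕ) (T : Tensor p n (k - 1)), T ≠ 0 →
        (∀ (σ : Equiv.Perm (Fin (k - 1))) (v : Fin (k - 1) → (Fin n → ZMod p)),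
          T (v ∘ σ) = T v) →
        c * (p : ℝ) ^ n ≤ (Nat.card {x : Fin n → ZMod p // T (fun _ => x) = 0} : ℝ) :=
  stmt12_general k p hk (hp := hp)
end
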